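/- The symbolic lattice L satisfies the absorption laws: for all l₁, l₂ ∈ L, l₁ ⊔ (l₁ ⊓ l₂) = l₁ and l₁ ⊓ (l₁ ⊔ l₂) = l₁. -/

import Mathlib

inductive SymExpr (P U B F : Type*) where
  | bot : SymExpr P U B F
  | top : SymExpr P U B F
  | prim : P → SymExpr P U B F
  | unop : U → SymExpr P U B F → SymExpr P U B F
  | binop : B → SymExpr P U B F → SymExpr P U B F → SymExpr P U B F
  | fn : F → List (SymExpr P U B F) → SymExpr P U B F
  | phi : List (SymExpr P U B F) → SymExpr P U B F

namespace SymExpr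

variable {P U B F : Type*}

/-- The partial order `⊑` on the symbolic lattice. -/
inductive Le : SymExpr P U B F → SymExpr P U B F → Prop where
  | bot (l) : Le .bot l
  | top (l) : Le l .top
  | prim (p : P) : Le (.prim p) (.prim p)
  | unop {l l'} (u : U) : Le l l' → Le (.unop u l) (.unop u l')
  | binop {l₁ l₂ l₁' l₂'} (b : B) : Le l₁ l₁' → Le l₂ l₂' →
      Le (.binop b l₁ l₂) (.binop b l₁' l₂')
  | fn {ls ls'} (f : F) : List.Forall₂ Le ls ls' → Le (.fn f ls) (.fn f ls')
  | phi {ls ls'} : List.Forall₂ Le ls ls' → Le (.phi ls) (.phi ls')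

attribute [local instance] Classical.propDecidable

mutual
noncomputable def join : SymExpr P U B F → SymExpr P U B F → SymExpr P U B F
  | .bot, l => l
  | l, .bot => l
  | .prim p, .prim p' => if p = p' then .prim p else .top
  | .unop u l, .unop u' l' => if u = u' then .unop u (join l l') else .top
  | .binop b l₁ l₂, .binop b' l₁' l₂' =>
      if b = b' then .binop b (join l₁ l₁') (join l₂ l₂') else .top
  | .fn f ls, .fn f' ls' =>
      if f = f' ∧ ls.length = ls'.length then .fn f (joinList ls ls') else .top
  | .phi ls, .phi ls' =>
      if ls.length = ls'.length then .phi (joinList ls ls') else .top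
  | _, _ => .top

noncomputable def joinList : List (SymExpr P U B F) → List (SymExpr P U B F) → List (SymExpr P U B F)
  | l :: ls, l' :: ls' => join l l' :: joinList ls ls'
  | _, _ => []
end

mutual
noncomputable def meet : SymExpr P U B F → SymExpr P U B F → SymExpr P U B F
  | .top, l => l
  | l, .top => l
  | .prim p, .prim p' => if p = p' then .prim p else .bot
  | .unop u l, .unop u' l' => if u = u' then .unop u (meet l l') else .bot
  | .binop b l₁ l₂, .binop b' l₁' l₂' =>
      if b = b' then .binop b (meet l₁ l₁') (meet l₂ l₂') else .bot
  | .fn f ls, .fn f' ls' =>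
      if f = f' ∧ ls.length = ls'.length then .fn f (meetList ls ls') else .bot
  | .phi ls, .phi ls' =>
      if ls.length = ls'.length then .phi (meetList ls ls') else .bot
  | _, _ => .bot

noncomputable def meetList : List (SymExpr P U B F) → List (SymExpr P U B F) → List (SymExpr P U B F)
  | l :: ls, l' :: ls' => meet l l' :: meetList ls ls'
  | _, _ => []
end

mutual
def depth : SymExpr P U B F → ℕ
  | .bot => 0
  | .top => 0
  | .prim _ => 0
  | .unop _ l => 1 + depth l
  | .binop _ l₁ l₂ => 1 + max (depth l₁) (depth l₂)
  | .fn _ ls => 1 + depthList ls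
  | .phi ls => 1 + depthList ls

def depthList : List (SymExpr P U B F) → ℕ
  | [] => 0
  | l :: ls => max (depth l) (depthList ls)
end

/-- The widening truncation `T_i`. -/
def trunc : ℕ → SymExpr P U B F → SymExpr P U B F
  | _, .bot => .bot
  | _, .top => .top
  | _, .prim p => .prim p
  | 0, .unop _ _ => .top
  | 0, .binop _ _ _ => .top
  | 0, .fn _ _ => .top
  | 0, .phi _ => .top
  | i + 1, .unop u l => .unop u (trunc i l)
  | i + 1, .binop b l₁ l₂ => .binop b (trunc i l₁) (trunc i l₂)
  | i + 1, .fn f ls => .fn f (ls.map (fun l => trunc i l))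
  | i + 1, .phi ls => .phi (ls.map (fun l => trunc i l))

end SymExpr

/-! Absorption is inherited from the order `Le`: `l ⊓ m ⊑ l` and `l ⊑ l ⊔ m`, while joining `l` with
anything below it, or meeting it with anything above it, returns `l`. -/

namespace SymExpr

variable {P U B F : Type*}

mutual
theorem Le.refl : ∀ l : SymExpr P U B F, Le l l
  | .bot => .bot _
  | .top => .top _
  | .prim p => .prim p
  | .unop u l => .unop u (Le.refl l)
  | .binop b l₁ l₂ => .binop b (Le.refl l₁) (Le.refl l₂)
  | .fn f ls => .fn f (Le.forall₂_refl ls)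
  | .phi ls => .phi (Le.forall₂_refl ls)

theorem Le.forall₂_refl : ∀ ls : List (SymExpr P U B F), List.Forall₂ Le ls ls
  | [] => .nil
  | l :: ls => .cons (Le.refl l) (Le.forall₂_refl ls)
end

mutual
theorem meet_le_left : ∀ l m : SymExpr P U B F, Le (meet l m) l
  | .bot, m => by cases m <;> simpa [meet] using Le.bot _
  | .top, m => by cases m <;> simpa [meet] using Le.top _
  | .prim p, m => by
    cases m <;> simp only [meet] <;> try split_ifs
    all_goals first | exact .bot _ | exact .refl _
  | .unop u l, m => by
    cases m <;> simp only [meet] <;> try split_ifs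
    all_goals first | exact .bot _ | exact .refl _ | exact .unop u (meet_le_left l _)
  | .binop b l₁ l₂, m => by
    cases m <;> simp only [meet] <;> try split_ifs
    all_goals first
      | exact .bot _
      | exact .refl _
      | exact .binop b (meet_le_left l₁ _) (meet_le_left l₂ _)
  | .fn f ls, m => by
    cases m <;> simp only [meet] <;> try split_ifs with h
    all_goals first | exact .bot _ | exact .refl _ | exact .fn f (meetList_le_left ls _ h.2)
  | .phi ls, m => by
    cases m <;> simp only [meet] <;> try split_ifs with h
    all_goals first | exact .bot _ | exact .refl _ | exact .phi (meetList_le_left ls _ h)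

theorem meetList_le_left : ∀ (ls ms : List (SymExpr P U B F)), ls.length = ms.length →
    List.Forall₂ Le (meetList ls ms) ls
  | [], [], _ => by simp [meetList]
  | l :: ls, m :: ms, h => by
    simp only [meetList]
    exact .cons (meet_le_left l m) (meetList_le_left ls ms (by simpa using h))
  | [], _ :: _, h | _ :: _, [], h => by simp at h
end

mutual
theorem le_join_left : ∀ l m : SymExpr P U B F, Le l (join l m)
  | .bot, m => by cases m <;> simpa [join] using Le.bot _
  | .top, m => by cases m <;> simpa [join] using Le.top _
  | .prim p, m => by
    cases m <;> simp only [join] <;> try split_ifs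
    all_goals first | exact .top _ | exact .refl _
  | .unop u l, m => by
    cases m <;> simp only [join] <;> try split_ifs
    all_goals first | exact .top _ | exact .refl _ | exact .unop u (le_join_left l _)
  | .binop b l₁ l₂, m => by
    cases m <;> simp only [join] <;> try split_ifs
    all_goals first
      | exact .top _
      | exact .refl _
      | exact .binop b (le_join_left l₁ _) (le_join_left l₂ _)
  | .fn f ls, m => by
    cases m <;> simp only [join] <;> try split_ifs with h
    all_goals first | exact .top _ | exact .refl _ | exact .fn f (le_joinList_left ls _ h.2)
  | .phi ls, m => by
    cases m <;> simp only [join] <;> try split_ifs with h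
    all_goals first | exact .top _ | exact .refl _ | exact .phi (le_joinList_left ls _ h)

theorem le_joinList_left : ∀ (ls ms : List (SymExpr P U B F)), ls.length = ms.length →
    List.Forall₂ Le ls (joinList ls ms)
  | [], [], _ => by simp [joinList]
  | l :: ls, m :: ms, h => by
    simp only [joinList]
    exact .cons (le_join_left l m) (le_joinList_left ls ms (by simpa using h))
  | [], _ :: _, h | _ :: _, [], h => by simp at h
end

theorem join_bot_right (l : SymExpr P U B F) : join l .bot = l := by
  cases l <;> simp [join]

mutual
theorem join_eq_left_of_le : ∀ {l m : SymExpr P U B F}, Le m l → join l m = l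
  | _, _, .bot _ => join_bot_right _
  | _, m, .top _ => by cases m <;> simp [join]
  | _, _, .prim _ => by simp [join]
  | _, _, .unop _ h => by simp [join, join_eq_left_of_le h]
  | _, _, .binop _ h₁ h₂ => by simp [join, join_eq_left_of_le h₁, join_eq_left_of_le h₂]
  | _, _, .fn _ h => by simp [join, h.length_eq, joinList_eq_left_of_forall₂ h]
  | _, _, .phi h => by simp [join, h.length_eq, joinList_eq_left_of_forall₂ h]

theorem joinList_eq_left_of_forall₂ : ∀ {ls ms : List (SymExpr P U B F)},
    List.Forall₂ Le ms ls → joinList ls ms = ls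
  | _, _, .nil => by simp [joinList]
  | _, _, .cons h hs => by simp [joinList, join_eq_left_of_le h, joinList_eq_left_of_forall₂ hs]
end

theorem meet_top_right (l : SymExpr P U B F) : meet l .top = l := by
  cases l <;> simp [meet]

mutual
theorem meet_eq_left_of_le : ∀ {l m : SymExpr P U B F}, Le l m → meet l m = l
  | _, m, .bot _ => by cases m <;> simp [meet]
  | _, _, .top _ => meet_top_right _
  | _, _, .prim _ => by simp [meet]
  | _, _, .unop _ h => by simp [meet, meet_eq_left_of_le h]
  | _, _, .binop _ h₁ h₂ => by simp [meet, meet_eq_left_of_le h₁, meet_eq_left_of_le h₂]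
  | _, _, .fn _ h => by simp [meet, h.length_eq, meetList_eq_left_of_forall₂ h]
  | _, _, .phi h => by simp [meet, h.length_eq, meetList_eq_left_of_forall₂ h]

theorem meetList_eq_left_of_forall₂ : ∀ {ls ms : List (SymExpr P U B F)},
    List.Forall₂ Le ls ms → meetList ls ms = ls
  | _, _, .nil => by simp [meetList]
  | _, _, .cons h hs => by simp [meetList, meet_eq_left_of_le h, meetList_eq_left_of_forall₂ hs]
end

end SymExpr

/-- the absorption laws hold. -/
theorem SymExpr.absorption {P U B F : Type*} (l₁ l₂ : SymExpr P U B F) :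
    l₁.join (l₁.meet l₂) = l₁ ∧ l₁.meet (l₁.join l₂) = l₁ :=
  ⟨join_eq_left_of_le (meet_le_left l₁ l₂), meet_eq_left_of_le (le_join_left l₁ l₂)⟩
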